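/- For all integers a, b ≥ 2 there exists a constant C > 0 such that for every n and every edge coloring of K_n with the property that every a(b+1)-element subset of vertices spans edges of at least (a(b+1) choose 2) − ba + b + 1 distinct colors, the color energy satisfies 𝔈(G) = Σ_c m_c² ≤ C · n^{3 − 1/b}. -/

import Mathlib

open Finset

/-- The set of colors appearing on edges (non-diagonal unordered pairs) with both
endpoints in `S`, for an edge coloring `col` of the complete graph on `Fin n`. -/
def colorsIn {n : ℕ} {α : Type} [DecidableEq α]
    (col : Sym2 (Fin n) → α) (S : Finset (Fin n)) : Finset α :=
  (S.sym2.filter (fun e => ¬ e.IsDiag)).image col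

/-- The number of edges (non-diagonal unordered pairs) of `K_n` assigned color `c`. -/
def edgeCount {n : ℕ} {α : Type} [DecidableEq α]
    (col : Sym2 (Fin n) → α) (c : α) : ℕ :=
  (Finset.univ.filter (fun e : Sym2 (Fin n) => ¬ e.IsDiag ∧ col e = c)).card

/-! Inside any `a(b+1)` vertices the local property allows fewer than `ab - b` repeated colors.
Hence every vertex has at most `ab - b` neighbours of each color, and, by a greedy
independent-set argument, any `b` colors are all seen at only `O(1)` vertices. Bounding `m_c` by
the color degrees, the energy is `O(1)` times the number of triples `(v, w, c)` with `c` seen at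
both `v` and `w`; double counting common `b`-sets of colors and Jensen's inequality bound this
by `O(n^(3 - 1/b))`, the Kővári–Sós–Turán argument. -/

theorem rpow_three_sub_inv_pow {x : ℝ} (hx : 0 ≤ x) {b : ℕ} (hb : b ≠ 0) :
    (x ^ ((3 : ℝ) - 1 / b)) ^ b = x ^ (3 * b - 1) := by
  have hb' : (b : ℝ) ≠ 0 := Nat.cast_ne_zero.2 hb
  rw [← Real.rpow_natCast, ← Real.rpow_mul hx, ← Real.rpow_natCast x,
    Nat.cast_sub (by omega), Nat.cast_mul]
  congr 1
  field_simp
  ring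

theorem sq_le_rpow_three_sub_inv (n b : ℕ) : (n : ℝ) ^ 2 ≤ (n : ℝ) ^ ((3 : ℝ) - 1 / b) := by
  have hexp : (2 : ℝ) ≤ 3 - 1 / b := by
    have : 1 / (b : ℝ) ≤ 1 := by
      rcases b.eq_zero_or_pos with rfl | hb
      · simp
      · exact (div_le_one (by exact_mod_cast hb)).2 (by exact_mod_cast hb)
    linarith
  rcases n.eq_zero_or_pos with rfl | hn
  · rw [Nat.cast_zero, Real.zero_rpow (by linarith)]
    simp
  · rw [← Real.rpow_natCast]
    exact Real.rpow_le_rpow_of_exponent_le (by exact_mod_cast hn) (by exact_mod_cast hexp)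

theorem card_filter_not_isDiag_sym2 {β : Type*} [DecidableEq β] (s : Finset β) :
    #{e ∈ s.sym2 | ¬e.IsDiag} = (#s).choose 2 := by
  rw [sym2_eq_image, Sym2.filter_image_mk_not_isDiag, Sym2.card_image_offDiag]

theorem card_image_add_card_mul_le {β γ : Type*} [DecidableEq γ] (s : Finset β) (f : β → γ)
    (Γ : Finset γ) {A : ℕ} (hA : ∀ c ∈ Γ, A ≤ #{x ∈ s | f x = c}) :
    #(s.image f) + #Γ * A ≤ #s + #Γ := by
  have hin : #Γ * A ≤ #{x ∈ s | f x ∈ Γ} := by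
    rw [card_eq_sum_card_fiberwise (s := {x ∈ s | f x ∈ Γ}) (t := Γ) (f := f)
      (fun x hx => (mem_filter.1 hx).2), ← smul_eq_mul]
    refine card_nsmul_le_sum _ _ _ fun c hc => (hA c hc).trans (card_le_card fun x hx => ?_)
    simp only [mem_filter] at hx ⊢
    exact ⟨⟨hx.1, hx.2 ▸ hc⟩, hx.2⟩
  have hout : #(s.image f) ≤ #{x ∈ s | f x ∉ Γ} + #Γ := by
    refine (card_le_card (t := {x ∈ s | f x ∉ Γ}.image f ∪ Γ) fun y hy => ?_).trans
      ((card_union_le _ _).trans (Nat.add_le_add_right card_image_le _))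
    obtain ⟨x, hx, rfl⟩ := mem_image.1 hy
    by_cases h : f x ∈ Γ
    · exact mem_union_right _ h
    · exact mem_union_left _ (mem_image_of_mem f (mem_filter.2 ⟨hx, h⟩))
  have := card_filter_add_card_filter_not (s := s) (p := fun x => f x ∈ Γ)
  omega

theorem SimpleGraph.exists_isIndepSet_card_eq_of_degree_le {V : Type*} [Fintype V]
    [DecidableEq V] (G : SimpleGraph V) [DecidableRel G.Adj] {D : ℕ}
    (hD : ∀ v, G.degree v ≤ D) :
    ∀ (t : ℕ) (P : Finset V), t * (D + 1) ≤ #P → ∃ W ⊆ P, #W = t ∧ G.IsIndepSet W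
  | 0, _, _ => ⟨∅, empty_subset _, card_empty, by simp⟩
  | t + 1, P, hP => by
    obtain ⟨v, hv⟩ : P.Nonempty := card_pos.1 (by rw [add_mul] at hP; omega)
    set N := insert v (G.neighborFinset v)
    have hN : #N ≤ D + 1 := (card_insert_le _ _).trans (Nat.add_le_add_right (hD v) 1)
    obtain ⟨W, hWP, hW, hWind⟩ := exists_isIndepSet_card_eq_of_degree_le G hD t (P \ N)
      (by have := le_card_sdiff N P; rw [add_mul] at hP; omega)
    have hvW : v ∉ W := fun h => (mem_sdiff.1 (hWP h)).2 (mem_insert_self _ _)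
    refine ⟨insert v W, insert_subset hv (hWP.trans sdiff_subset),
      by rw [card_insert_of_notMem hvW, hW], ?_⟩
    rw [coe_insert, SimpleGraph.IsIndepSet, Set.pairwise_insert]
    refine ⟨hWind, fun w hw _ => ⟨fun hadj => ?_, fun hadj => ?_⟩⟩ <;>
      refine (mem_sdiff.1 (hWP hw)).2 (mem_insert_of_mem ((G.mem_neighborFinset v w).2 ?_))
    exacts [hadj, hadj.symm]

theorem Nat.sub_pow_le_pow_mul_choose (m b : ℕ) : (m - b) ^ b ≤ b ^ b * m.choose b :=
  calc (m - b) ^ b ≤ (m + 1 - b) ^ b := Nat.pow_le_pow_left (by omega) b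
    _ ≤ m.descFactorial b := Nat.pow_sub_le_descFactorial m b
    _ = b.factorial * m.choose b := Nat.descFactorial_eq_factorial_mul_choose m b
    _ ≤ b ^ b * m.choose b := Nat.mul_le_mul_right _ (Nat.factorial_le_pow b)

theorem pow_sum_sub_le {ι : Type*} (s : Finset ι) (x : ι → ℕ) {b : ℕ} (hb : b ≠ 0) :
    (∑ i ∈ s, (x i - b)) ^ b ≤ #s ^ (b - 1) * (b ^ b * ∑ i ∈ s, (x i).choose b) := by
  obtain ⟨m, rfl⟩ := Nat.exists_eq_succ_of_ne_zero hb
  calc (∑ i ∈ s, (x i - (m + 1))) ^ (m + 1)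
      ≤ #s ^ m * ∑ i ∈ s, (x i - (m + 1)) ^ (m + 1) :=
        pow_sum_le_card_mul_sum_pow (fun _ _ => Nat.zero_le _) m
    _ ≤ #s ^ m * ∑ i ∈ s, (m + 1) ^ (m + 1) * (x i).choose (m + 1) := by
        gcongr with i
        exact Nat.sub_pow_le_pow_mul_choose _ _
    _ = #s ^ (m + 1 - 1) * ((m + 1) ^ (m + 1) * ∑ i ∈ s, (x i).choose (m + 1)) := by
        rw [Nat.add_sub_cancel, ← mul_sum]

section SetFamily

variable {ι β : Type*} [Fintype ι] [DecidableEq β]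

theorem filter_powersetCard_subset_eq {s U : Finset β} (h : s ⊆ U) (b : ℕ) :
    {Γ ∈ U.powersetCard b | Γ ⊆ s} = s.powersetCard b := by
  ext Γ
  simp only [mem_filter, mem_powersetCard]
  exact ⟨fun ⟨⟨_, hb⟩, hs⟩ => ⟨hs, hb⟩, fun ⟨hs, hb⟩ => ⟨⟨hs.trans h, hb⟩, hs⟩⟩

theorem sum_card_filter_subset_eq_sum_choose (T : ι → Finset β) {U : Finset β}
    (hU : ∀ i, T i ⊆ U) (b : ℕ) :
    ∑ Γ ∈ U.powersetCard b, #{i | Γ ⊆ T i} = ∑ i, (#(T i)).choose b := by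
  have := sum_card_bipartiteAbove_eq_sum_card_bipartiteBelow (s := univ)
    (t := U.powersetCard b) (r := fun i Γ => Γ ⊆ T i)
  simp only [bipartiteAbove, bipartiteBelow, filter_powersetCard_subset_eq (hU _),
    card_powersetCard] at this
  exact this.symm

theorem sum_choose_card_inter_eq (T : ι → Finset β) {U : Finset β} (hU : ∀ i, T i ⊆ U)
    (b : ℕ) :
    ∑ p : ι × ι, (#(T p.1 ∩ T p.2)).choose b = ∑ Γ ∈ U.powersetCard b, #{i | Γ ⊆ T i} ^ 2 := by
  rw [← sum_card_filter_subset_eq_sum_choose (fun p : ι × ι => T p.1 ∩ T p.2)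
    (fun p => inter_subset_left.trans (hU p.1))]
  refine sum_congr rfl fun Γ _ => ?_
  rw [sq, ← card_product, ← filter_product, univ_product_univ]
  simp only [subset_inter_iff]

theorem sum_choose_card_inter_le {b τ : ℕ} (T : ι → Finset β)
    (hT : ∀ i, #(T i) ≤ Fintype.card ι)
    (hτ : ∀ Γ : Finset β, #Γ = b → #{i | Γ ⊆ T i} ≤ τ) :
    ∑ p : ι × ι, (#(T p.1 ∩ T p.2)).choose b
      ≤ τ * (Fintype.card ι * Fintype.card ι ^ b) := by
  have hU : ∀ i, T i ⊆ univ.biUnion T := fun i => subset_biUnion_of_mem T (mem_univ i)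
  calc ∑ p : ι × ι, (#(T p.1 ∩ T p.2)).choose b
      = ∑ Γ ∈ (univ.biUnion T).powersetCard b, #{i | Γ ⊆ T i} ^ 2 :=
        sum_choose_card_inter_eq T hU b
    _ ≤ ∑ Γ ∈ (univ.biUnion T).powersetCard b, τ * #{i | Γ ⊆ T i} := by
        gcongr with Γ hΓ
        rw [sq]
        exact Nat.mul_le_mul_right _ (hτ Γ (mem_powersetCard.1 hΓ).2)
    _ = τ * ∑ i, (#(T i)).choose b := by
        rw [← mul_sum, sum_card_filter_subset_eq_sum_choose T hU]
    _ ≤ τ * ∑ _i : ι, Fintype.card ι ^ b := by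
        gcongr with i
        exact (Nat.choose_le_pow _ _).trans (Nat.pow_le_pow_left (hT i) b)
    _ = τ * (Fintype.card ι * Fintype.card ι ^ b) := by
        rw [sum_const, card_univ, smul_eq_mul]

/-- Jensen bounds `∑ (|Tᵢ ∩ Tⱼ| - b)` by the `b`-th moment, whose binomial version counts pairs
of sets through a common `b`-set. -/
theorem sum_card_inter_le {b τ : ℕ} (hb : b ≠ 0) (T : ι → Finset β)
    (hT : ∀ i, #(T i) ≤ Fintype.card ι)
    (hτ : ∀ Γ : Finset β, #Γ = b → #{i | Γ ⊆ T i} ≤ τ) :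
    (∑ p : ι × ι, #(T p.1 ∩ T p.2) : ℝ)
      ≤ (b + b ^ b * τ) * (Fintype.card ι : ℝ) ^ ((3 : ℝ) - 1 / b) := by
  set N := Fintype.card ι
  set x : ι × ι → ℕ := fun p => #(T p.1 ∩ T p.2)
  have hsplit : ∑ p, x p ≤ b * N ^ 2 + ∑ p, (x p - b) := by
    calc ∑ p, x p ≤ ∑ p : ι × ι, (b + (x p - b)) := sum_le_sum fun p _ => by omega
      _ = b * N ^ 2 + ∑ p, (x p - b) := by
        rw [sum_add_distrib, sum_const, card_univ, Fintype.card_prod, smul_eq_mul]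
        ring
  have hmoment : (∑ p, (x p - b)) ^ b ≤ (b ^ b * τ) ^ b * N ^ (3 * b - 1) := by
    calc (∑ p, (x p - b)) ^ b ≤ (N ^ 2) ^ (b - 1) * (b ^ b * (τ * (N * N ^ b))) := by
          refine (pow_sum_sub_le univ x hb).trans ?_
          rw [card_univ, Fintype.card_prod, ← sq]
          gcongr
          exact sum_choose_card_inter_le T hT hτ
      _ = (b ^ b * τ) * N ^ (3 * b - 1) := by
          rw [show 3 * b - 1 = 2 * (b - 1) + (b + 1) by omega, pow_add, pow_mul]
          ring
      _ ≤ (b ^ b * τ) ^ b * N ^ (3 * b - 1) := by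
          gcongr
          exact Nat.le_self_pow hb _
  generalize ∑ p, (x p - b) = X at hsplit hmoment
  have htail : (X : ℝ) ≤ (b ^ b * τ) * (N : ℝ) ^ ((3 : ℝ) - 1 / b) := by
    refine le_of_pow_le_pow_left₀ hb (by positivity) ?_
    rw [mul_pow, rpow_three_sub_inv_pow (Nat.cast_nonneg N) hb]
    exact_mod_cast hmoment
  calc (∑ p, x p : ℝ) ≤ b * (N : ℝ) ^ 2 + (X : ℝ) := by exact_mod_cast hsplit
    _ ≤ b * (N : ℝ) ^ ((3 : ℝ) - 1 / b) + (b ^ b * τ) * (N : ℝ) ^ ((3 : ℝ) - 1 / b) := by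
        gcongr
        exact sq_le_rpow_three_sub_inv N b
    _ = (b + b ^ b * τ) * (N : ℝ) ^ ((3 : ℝ) - 1 / b) := by ring

end SetFamily

theorem mul_le_choose_two_mul_succ (a b : ℕ) : b * a ≤ (a * (b + 1)).choose 2 := by
  rw [Nat.choose_two_right, Nat.le_div_iff_mul_le two_pos]
  rcases Nat.eq_zero_or_pos a with rfl | ha
  · simp
  rcases Nat.eq_zero_or_pos b with rfl | hb
  · simp
  have hk : a * (b + 1) = a * b + a := by ring
  calc b * a * 2 = 2 * (a * b) := by ring
    _ ≤ a * (b + 1) * (a * (b + 1) - 1) :=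
        Nat.mul_le_mul (by nlinarith) (by rw [hk]; omega)

section Coloring

variable {n : ℕ} {α : Type} [DecidableEq α] (col : Sym2 (Fin n) → α)

def HasLocalProperty (k ℓ : ℕ) : Prop :=
  ∀ S : Finset (Fin n), #S = k → ℓ ≤ #(colorsIn col S)

def colorEnergy : ℕ :=
  ∑ c ∈ colorsIn col univ, edgeCount col c ^ 2

def colorsAt (v : Fin n) : Finset α :=
  (univ.erase v).image fun u => col s(v, u)

def colorDegree (v : Fin n) (c : α) : ℕ :=
  #{u | u ≠ v ∧ col s(v, u) = c}

theorem mem_colorsAt {v : Fin n} {c : α} : c ∈ colorsAt col v ↔ ∃ u, u ≠ v ∧ col s(v, u) = c := by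
  simp [colorsAt]

theorem card_colorsAt_le (v : Fin n) : #(colorsAt col v) ≤ n :=
  card_image_le.trans ((card_erase_le).trans (card_fin n).le)

theorem colorDegree_le_card (v : Fin n) (c : α) : colorDegree col v c ≤ n :=
  (card_filter_le _ _).trans (card_fin n).le

theorem colorDegree_eq_zero_of_notMem {v : Fin n} {c : α} (h : c ∉ colorsAt col v) :
    colorDegree col v c = 0 := by
  rw [mem_colorsAt] at h
  push Not at h
  exact card_eq_zero.2 (filter_eq_empty_iff.2 fun u _ hu => h u hu.1 hu.2)

theorem edgeCount_le_sum_colorDegree (c : α) : edgeCount col c ≤ ∑ v, colorDegree col v c := by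
  refine (card_le_card fun e he => ?_).trans (card_biUnion_le.trans
    (sum_le_sum fun v _ => card_image_le (s := {u | u ≠ v ∧ col s(v, u) = c}) (f := (s(v, ·)))))
  induction e using Sym2.inductionOn with
  | hf x y =>
    simp only [mem_filter, mem_univ, true_and, Sym2.mk_isDiag_iff] at he
    exact mem_biUnion.2 ⟨x, mem_univ _, mem_image.2 ⟨y, by simp [he.2, Ne.symm he.1], rfl⟩⟩

/-- Square `m_c ≤ ∑ᵥ deg_c v`; the product `deg_c v * deg_c w` vanishes unless `c` is seen at
both `v` and `w`. -/
theorem colorEnergy_le {M : ℕ} (hM : ∀ v c, colorDegree col v c ≤ M) :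
    colorEnergy col ≤ M ^ 2 * ∑ p : Fin n × Fin n, #(colorsAt col p.1 ∩ colorsAt col p.2) := by
  calc colorEnergy col
      ≤ ∑ c ∈ colorsIn col univ, ∑ p : Fin n × Fin n,
          colorDegree col p.1 c * colorDegree col p.2 c := by
        refine sum_le_sum fun c _ => ?_
        rw [Fintype.sum_prod_type' (fun v w => colorDegree col v c * colorDegree col w c),
          ← Fintype.sum_mul_sum, ← sq]
        exact Nat.pow_le_pow_left (edgeCount_le_sum_colorDegree col c) 2
    _ = ∑ p : Fin n × Fin n, ∑ c ∈ colorsIn col univ,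
          colorDegree col p.1 c * colorDegree col p.2 c := sum_comm
    _ ≤ ∑ p : Fin n × Fin n, ∑ _c ∈ colorsAt col p.1 ∩ colorsAt col p.2, M ^ 2 := by
        gcongr with p
        refine (sum_le_sum_of_ne_zero fun c _ hc => ?_).trans (sum_le_sum fun c _ => ?_)
        · refine mem_inter.2 ⟨?_, ?_⟩ <;> by_contra h <;>
            simp [colorDegree_eq_zero_of_notMem col h] at hc
        · exact sq M ▸ Nat.mul_le_mul (hM _ _) (hM _ _)
    _ = M ^ 2 * ∑ p : Fin n × Fin n, #(colorsAt col p.1 ∩ colorsAt col p.2) := by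
        simp only [sum_const, smul_eq_mul, mul_sum, mul_comm]

theorem HasLocalProperty.add_card_mul_le {k ℓ : ℕ} (hloc : HasLocalProperty col k ℓ)
    (hkn : k ≤ n) {V : Finset (Fin n)} (hV : #V ≤ k) {Γ : Finset α} {A : ℕ}
    (hA : ∀ c ∈ Γ, A ≤ #{e ∈ V.sym2 | ¬e.IsDiag ∧ col e = c}) :
    ℓ + #Γ * A ≤ k.choose 2 + #Γ := by
  obtain ⟨S, hVS, -, hS⟩ :=
    exists_subsuperset_card_eq (subset_univ V) hV (by simpa using hkn)
  have hfib : ∀ c ∈ Γ, A ≤ #{e ∈ {e ∈ S.sym2 | ¬e.IsDiag} | col e = c} := fun c hc =>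
    (hA c hc).trans (card_le_card fun e he => by
      simp only [mem_filter] at he ⊢
      exact ⟨⟨sym2_mono hVS he.1, he.2.1⟩, he.2.2⟩)
  have hcount := card_image_add_card_mul_le _ col Γ hfib
  rw [card_filter_not_isDiag_sym2, hS] at hcount
  have hcolors := hloc S hS
  unfold colorsIn at hcolors
  omega

theorem colorDegree_le {a b : ℕ} (ha : 2 ≤ a)
    (hloc : HasLocalProperty col (a * (b + 1)) ((a * (b + 1)).choose 2 - b * a + b + 1))
    (hn : a * (b + 1) ≤ n) (v : Fin n) (c : α) : colorDegree col v c ≤ b * a - b := by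
  by_contra! h
  obtain ⟨t, ht, htcard⟩ := exists_subset_card_eq (n := b * a - b + 1) h
  have hk : a * (b + 1) = b * a + a := by ring
  have hstar := hloc.add_card_mul_le col hn (V := insert v t) (Γ := {c}) (A := b * a - b + 1)
    ((card_insert_le _ _).trans (by omega)) fun c' hc' => by
      rw [mem_singleton.1 hc', ← htcard,
        ← card_image_of_injective (f := fun u => s(v, u)) t fun _ _ => Sym2.congr_right.1]
      refine card_le_card fun e he => ?_
      obtain ⟨u, hu, rfl⟩ := mem_image.1 he
      have hu' := (mem_filter.1 (ht hu)).2
      simp [hu, hu'.2, Ne.symm hu'.1]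
  have hba := mul_le_choose_two_mul_succ a b
  have hb : b ≤ b * a := Nat.le_mul_of_pos_right b (by omega)
  rw [card_singleton] at hstar
  omega

def colorClassGraph (Γ : Finset α) : SimpleGraph (Fin n) where
  Adj u v := u ≠ v ∧ col s(u, v) ∈ Γ
  symm := ⟨fun _ _ h => ⟨h.1.symm, Sym2.eq_swap ▸ h.2⟩⟩
  loopless := ⟨fun _ h => h.1 rfl⟩

instance (Γ : Finset α) : DecidableRel (colorClassGraph col Γ).Adj :=
  fun _ _ => inferInstanceAs (Decidable (_ ∧ _))

theorem degree_colorClassGraph_le (Γ : Finset α) (v : Fin n) :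
    (colorClassGraph col Γ).degree v ≤ ∑ c ∈ Γ, colorDegree col v c := by
  rw [← SimpleGraph.card_neighborFinset_eq_degree, SimpleGraph.neighborFinset_eq_filter,
    card_eq_sum_card_fiberwise (f := fun u => col s(v, u)) (t := Γ)
      fun u hu => (mem_filter.1 hu).2.2]
  gcongr with c
  refine card_le_card fun u hu => ?_
  simp only [mem_filter, mem_univ, true_and] at hu ⊢
  exact ⟨hu.1.1.symm, hu.2⟩

/-- Otherwise the greedy algorithm finds `a` vertices, pairwise joined by no edge of a color of
`Γ`, each seeing every color of `Γ`; the `ab` edges realising this are distinct and span at most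
`a(b+1)` vertices, which is too many repeated colors. -/
theorem card_filter_subset_colorsAt_le {a b : ℕ} (ha : 2 ≤ a)
    (hloc : HasLocalProperty col (a * (b + 1)) ((a * (b + 1)).choose 2 - b * a + b + 1))
    (hn : a * (b + 1) ≤ n) {Γ : Finset α} (hΓ : #Γ = b) :
    #{v | Γ ⊆ colorsAt col v} ≤ a * (b * (b * a - b) + 1) := by
  by_contra! h
  obtain ⟨W, hWP, hW, hind⟩ :=
    (colorClassGraph col Γ).exists_isIndepSet_card_eq_of_degree_le (D := b * (b * a - b))
      (fun v => (degree_colorClassGraph_le col Γ v).trans (by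
        simpa [hΓ] using sum_le_card_nsmul Γ _ _ fun c _ => colorDegree_le col ha hloc hn v c))
      a _ h.le
  have hpartner : ∀ w c, ∃ z, w ∈ W → c ∈ Γ → z ≠ w ∧ col s(w, z) = c := by
    intro w c
    by_cases hwc : w ∈ W ∧ c ∈ Γ
    · obtain ⟨z, hz⟩ := (mem_colorsAt col).1 ((mem_filter.1 (hWP hwc.1)).2 hwc.2)
      exact ⟨z, fun _ _ => hz⟩
    · exact ⟨w, fun hw hc => (hwc ⟨hw, hc⟩).elim⟩
  choose z hz using hpartner
  have hV : #(W ∪ W.biUnion fun w => Γ.image (z w)) ≤ a * (b + 1) := by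
    refine (card_union_le _ _).trans ?_
    rw [hW, mul_add, mul_one, add_comm]
    gcongr
    refine card_biUnion_le.trans ((sum_le_card_nsmul W _ b fun w _ =>
      card_image_le.trans hΓ.le).trans ?_)
    rw [hW, smul_eq_mul]
  have hkey := hloc.add_card_mul_le col hn hV (A := a) fun c hc => by
    rw [← hW, ← card_image_of_injOn (f := fun w => s(w, z w c)) ?inj]
    · refine card_le_card fun e he => ?_
      obtain ⟨w, hw, rfl⟩ := mem_image.1 he
      have hzw := hz w c hw hc
      simp only [mem_filter, mk_mem_sym2_iff, Sym2.mk_isDiag_iff]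
      exact ⟨⟨mem_union_left _ hw, mem_union_right _ (mem_biUnion.2
        ⟨w, hw, mem_image_of_mem _ hc⟩)⟩, Ne.symm hzw.1, hzw.2⟩
    · intro w hw w' hw' heq
      rcases Sym2.eq_iff.1 heq with ⟨hww', -⟩ | ⟨hw'z, hzw'⟩
      · exact hww'
      · by_contra hne
        refine hind hw' hw (Ne.symm hne) ⟨Ne.symm hne, ?_⟩
        rw [hw'z, (hz w' c hw' hc).2]
        exact hc
  have hba := mul_le_choose_two_mul_succ a b
  rw [hΓ] at hkey
  omega

theorem colorEnergy_le_of_card_lt {k : ℕ} (hn : n < k) (b : ℕ) :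
    (colorEnergy col : ℝ) ≤ (k ^ 3 : ℕ) * (n : ℝ) ^ ((3 : ℝ) - 1 / b) := by
  have hnat : colorEnergy col ≤ k ^ 3 * n ^ 2 :=
    calc colorEnergy col
        ≤ n ^ 2 * ∑ p : Fin n × Fin n, #(colorsAt col p.1 ∩ colorsAt col p.2) :=
          colorEnergy_le col (colorDegree_le_card col)
      _ ≤ n ^ 2 * ∑ _p : Fin n × Fin n, n := by
          gcongr with p
          exact (card_le_card inter_subset_left).trans (card_colorsAt_le col p.1)
      _ = n ^ 3 * n ^ 2 := by
          rw [sum_const, card_univ, Fintype.card_prod, Fintype.card_fin, smul_eq_mul]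
          ring
      _ ≤ k ^ 3 * n ^ 2 := by gcongr
  calc (colorEnergy col : ℝ) ≤ (k ^ 3 : ℕ) * (n : ℝ) ^ 2 := by exact_mod_cast hnat
    _ ≤ (k ^ 3 : ℕ) * (n : ℝ) ^ ((3 : ℝ) - 1 / b) := by
        gcongr
        exact sq_le_rpow_three_sub_inv n b

theorem colorEnergy_le_of_hasLocalProperty {a b : ℕ} (ha : 2 ≤ a) (hb : b ≠ 0)
    (hloc : HasLocalProperty col (a * (b + 1)) ((a * (b + 1)).choose 2 - b * a + b + 1))
    (hn : a * (b + 1) ≤ n) :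
    (colorEnergy col : ℝ) ≤ ((b * a - b) ^ 2 * (b + b ^ b * (a * (b * (b * a - b) + 1))) : ℕ)
      * (n : ℝ) ^ ((3 : ℝ) - 1 / b) := by
  have hinter := sum_card_inter_le hb (colorsAt col)
    (fun v => by simpa using card_colorsAt_le col v)
    fun Γ hΓ => card_filter_subset_colorsAt_le col ha hloc hn hΓ
  rw [Fintype.card_fin] at hinter
  calc (colorEnergy col : ℝ)
      ≤ ((b * a - b) ^ 2 : ℕ)
          * (∑ p : Fin n × Fin n, #(colorsAt col p.1 ∩ colorsAt col p.2) : ℝ) := by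
        exact_mod_cast colorEnergy_le col (colorDegree_le col ha hloc hn)
    _ ≤ _ := by
        rw [Nat.cast_mul, mul_assoc]
        gcongr
        exact_mod_cast hinter

end Coloring

/-- For all integers `a, b ≥ 2` there is `C > 0` such that for every `n` and every edge
coloring of `K_n` in which every `a(b+1)`-element vertex subset spans at least
`(a(b+1) choose 2) - ba + b + 1` distinct colors, the color energy satisfies
`𝔈(G) = Σ_c m_c² ≤ C n^(3 - 1/b)`. -/
theorem stmt16 (a b : ℕ) (ha : 2 ≤ a) (hb : 2 ≤ b) :
    ∃ C : ℝ, 0 < C ∧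
      ∀ (n : ℕ) (α : Type) (_ : DecidableEq α) (col : Sym2 (Fin n) → α),
        (∀ S : Finset (Fin n), S.card = a * (b + 1) →
          (a * (b + 1)).choose 2 - b * a + b + 1 ≤ (colorsIn col S).card) →
        ∑ c ∈ colorsIn col Finset.univ, ((edgeCount col c : ℝ)) ^ 2
          ≤ C * (n : ℝ) ^ ((3 : ℝ) - 1 / (b : ℝ)) := by
  refine ⟨(((b * a - b) ^ 2 * (b + b ^ b * (a * (b * (b * a - b) + 1)))
    + (a * (b + 1)) ^ 3 : ℕ) : ℝ), ?_, fun n α _ col hloc => ?_⟩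
  · have : 0 < a := by omega
    positivity
  have henergy : ∑ c ∈ colorsIn col univ, (edgeCount col c : ℝ) ^ 2 = colorEnergy col := by
    simp [colorEnergy]
  rw [henergy, Nat.cast_add, add_mul]
  rcases lt_or_ge n (a * (b + 1)) with hn | hn
  · exact le_add_of_nonneg_of_le (by positivity) (colorEnergy_le_of_card_lt col hn b)
  · exact le_add_of_le_of_nonneg
      (colorEnergy_le_of_hasLocalProperty col ha (by omega) hloc hn) (by positivity)
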